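/- Suppose k₁, k₂ ∈ ℂ \ {0} satisfy 0 ≤ Arg(k₁), Arg(k₂) < π. Define c₁ = e^{i·Arg(k₂)} if Re(k₁) ≥ 0 and c₁ = e^{i(Arg(k₂)−π)} if Re(k₁) < 0, and set α = 1/c₁. Then 0 ≤ Arg(k₂·α) ≤ π and 0 ≤ Arg(k₁² · conj(k₂) · conj(α)) ≤ π, where Arg here is taken in [0, 2π) with the convention Arg(z) ∈ [0,π] meaning Im(z) ≥ 0. -/

import Mathlib

open Real Complex

namespace Complex

theorem mul_inv_exp_I_mul_arg (z : ℂ) : z * (exp (I * z.arg))⁻¹ = ‖z‖ := by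
  nth_rw 1 [← norm_mul_exp_arg_mul_I z]
  rw [mul_comm I, mul_assoc, mul_inv_cancel₀ (exp_ne_zero _), mul_one]

theorem exp_I_mul_sub_pi (θ : ℂ) : exp (I * (θ - π)) = -exp (I * θ) := by
  rw [mul_sub, mul_comm I (π : ℂ), exp_sub_pi_mul_I]

theorem im_sq_mul_ofReal_nonneg {z : ℂ} {s : ℝ} (him : 0 ≤ z.im) (hre : 0 ≤ z.re * s) :
    0 ≤ (z ^ 2 * s).im := by
  have him_eq : (z ^ 2 * s).im = 2 * (z.re * s) * z.im := by
    simp only [sq, mul_im, mul_re, ofReal_re, ofReal_im]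
    ring
  rw [him_eq]
  positivity

end Complex

theorem stmt2_general (k₁ k₂ : ℂ)
    (ha₁ : 0 ≤ k₁.arg ∧ k₁.arg < π)
    (c₁ α : ℂ)
    (hc₁ : c₁ = if 0 ≤ k₁.re then Complex.exp (Complex.I * (k₂.arg : ℂ))
      else Complex.exp (Complex.I * ((k₂.arg : ℂ) - (π : ℂ))))
    (hα : α = 1 / c₁) :
    0 ≤ (k₂ * α).im ∧
      0 ≤ (k₁ ^ 2 * (starRingEnd ℂ) k₂ * (starRingEnd ℂ) α).im := by
  -- `α` rotates `k₂` onto the real axis, to the side that has the sign of `Re k₁`.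
  obtain ⟨s, hk₂α, hs⟩ : ∃ s : ℝ, k₂ * α = s ∧ 0 ≤ k₁.re * s := by
    rw [hα, hc₁, one_div]
    split_ifs with hre
    · exact ⟨‖k₂‖, mul_inv_exp_I_mul_arg k₂, mul_nonneg hre (norm_nonneg _)⟩
    · refine ⟨-‖k₂‖, ?_, ?_⟩
      · rw [exp_I_mul_sub_pi, inv_neg, mul_neg, mul_inv_exp_I_mul_arg, ofReal_neg]
      · exact mul_nonneg_of_nonpos_of_nonpos (le_of_not_ge hre) (neg_nonpos.mpr (norm_nonneg _))
  have hconj : starRingEnd ℂ k₂ * starRingEnd ℂ α = s := by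
    rw [← map_mul, hk₂α, conj_ofReal]
  refine ⟨by simp [hk₂α], ?_⟩
  rw [mul_assoc, hconj]
  exact im_sq_mul_ofReal_nonneg (arg_nonneg_iff.mp ha₁.1) hs

theorem stmt2 (k₁ k₂ : ℂ) (hk₁ : k₁ ≠ 0) (hk₂ : k₂ ≠ 0)
    (ha₁ : 0 ≤ k₁.arg ∧ k₁.arg < π) (ha₂ : 0 ≤ k₂.arg ∧ k₂.arg < π)
    (c₁ α : ℂ)
    (hc₁ : c₁ = if 0 ≤ k₁.re then Complex.exp (Complex.I * (k₂.arg : ℂ))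
      else Complex.exp (Complex.I * ((k₂.arg : ℂ) - (π : ℂ))))
    (hα : α = 1 / c₁) :
    0 ≤ (k₂ * α).im ∧
      0 ≤ (k₁ ^ 2 * (starRingEnd ℂ) k₂ * (starRingEnd ℂ) α).im :=
  stmt2_general k₁ k₂ ha₁ c₁ α hc₁ hα
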